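/- Let G=(V,E) be a directed polymatroidal network and let ℓ, ℓ(e,u), ℓ(e,v) be a fractional cut solution. Then there exist a finite directed edge-capacitated graph H=(V_H,E_H) with V ⊆ V_H, edge lengths ℓ': E_H → ℝ≥0 and edge costs c: E_H → ℝ≥0 ∪ {∞} such that: (i) dist_{ℓ'}(u,v) = dist_ℓ(u,v) for all u,v ∈ V; (ii) Σ_{e∈E_H} c(e)·ℓ'(e) = Σ_{v∈V} (ρ̂_v⁻(d_v⁻) + ρ̂_v⁺(d_v⁺)); and (iii) for every finite-cost F' ⊆ E_H there exists F ⊆ E such that every ordered pair (u,v) ∈ V×V separated by F' in H is separated by F in G, and ν(F) ≤ Σ_{e∈F'} c(e). -/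

import Mathlib

open Finset MeasureTheory
open scoped ENNReal Classical

/-- A directed polymatroidal network: a finite directed graph together with,
for each node `v`, polymatroids `rhoM v` on the edges entering `v` and
`rhoP v` on the edges leaving `v`. -/
structure DirPolyNet (V E : Type) [Fintype V] [Fintype E] [DecidableEq V] [DecidableEq E] where
  tail : E → V
  head : E → V
  rhoM : V → Finset E → ℝ
  rhoP : V → Finset E → ℝ
  rhoM_empty : ∀ v, rhoM v ∅ = 0
  rhoP_empty : ∀ v, rhoP v ∅ = 0
  rhoM_nonneg : ∀ v A, A ⊆ Finset.univ.filter (fun e => head e = v) → 0 ≤ rhoM v A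
  rhoP_nonneg : ∀ v A, A ⊆ Finset.univ.filter (fun e => tail e = v) → 0 ≤ rhoP v A
  rhoM_mono : ∀ v A B, A ⊆ B → B ⊆ Finset.univ.filter (fun e => head e = v) →
    rhoM v A ≤ rhoM v B
  rhoP_mono : ∀ v A B, A ⊆ B → B ⊆ Finset.univ.filter (fun e => tail e = v) →
    rhoP v A ≤ rhoP v B
  rhoM_submod : ∀ v A B, A ⊆ Finset.univ.filter (fun e => head e = v) →
    B ⊆ Finset.univ.filter (fun e => head e = v) →
    rhoM v (A ∪ B) + rhoM v (A ∩ B) ≤ rhoM v A + rhoM v B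
  rhoP_submod : ∀ v A B, A ⊆ Finset.univ.filter (fun e => tail e = v) →
    B ⊆ Finset.univ.filter (fun e => tail e = v) →
    rhoP v (A ∪ B) + rhoP v (A ∩ B) ≤ rhoP v A + rhoP v B

namespace DirPolyNet

variable {V E : Type} [Fintype V] [Fintype E] [DecidableEq V] [DecidableEq E]

/-- The set of edges entering `v` (the ground set of `rhoM v`). -/
def inE (N : DirPolyNet V E) (v : V) : Finset E :=
  Finset.univ.filter (fun e => N.head e = v)

/-- The set of edges leaving `v` (the ground set of `rhoP v`). -/
def outE (N : DirPolyNet V E) (v : V) : Finset E :=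
  Finset.univ.filter (fun e => N.tail e = v)

/-- `g` is a valid assignment of the edges of `F` to endpoints. -/
def Valid (N : DirPolyNet V E) (F : Finset E) (g : E → V) : Prop :=
  ∀ e ∈ F, g e = N.tail e ∨ g e = N.head e

/-- The cost `ν(F)` of the edge cut `F`: the minimum over valid assignments `g`
of `Σ_v (ρ⁻_v(δ⁻(v) ∩ g⁻¹(v)) + ρ⁺_v(δ⁺(v) ∩ g⁻¹(v)))`. -/
noncomputable def cutCost (N : DirPolyNet V E) (F : Finset E) : ℝ :=
  sInf { c : ℝ | ∃ g : E → V, N.Valid F g ∧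
    c = ∑ v : V, (N.rhoM v ((N.inE v ∩ F).filter (fun e => g e = v)) +
                  N.rhoP v ((N.outE v ∩ F).filter (fun e => g e = v))) }

/-- `IsWalk N s t p`: the list of edges `p` forms a directed walk from `s` to `t`. -/
def IsWalk (N : DirPolyNet V E) : V → V → List E → Prop
  | s, t, [] => s = t
  | s, t, e :: p => N.tail e = s ∧ IsWalk N (N.head e) t p

/-- The list of vertices visited by a walk starting at `s`. -/
def walkVerts (N : DirPolyNet V E) : V → List E → List V
  | s, [] => [s]
  | s, e :: p => s :: walkVerts N (N.head e) p

/-- A simple directed path from `s` to `t`. -/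
def IsPath (N : DirPolyNet V E) (s t : V) (p : List E) : Prop :=
  N.IsWalk s t p ∧ (N.walkVerts s p).Nodup

/-- `F` separates the ordered pair `(s,t)`: there is no `s→t` path avoiding `F`. -/
def Separates (N : DirPolyNet V E) (F : Finset E) (s t : V) : Prop :=
  ¬ ∃ p : List E, N.IsWalk s t p ∧ ∀ e ∈ p, e ∉ F

/-- Total flow on an edge `e`. -/
noncomputable def edgeFlow (N : DirPolyNet V E) {ι : Type} [Fintype ι]
    (f : ι → List E → ℝ) (e : E) : ℝ :=
  ∑ i : ι, ∑ᶠ p ∈ {p : List E | e ∈ p}, f i p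

/-- The rate of commodity `i`. -/
noncomputable def rate {ι : Type} (f : ι → List E → ℝ) (i : ι) : ℝ :=
  ∑ᶠ p : List E, f i p

/-- A feasible multicommodity flow for the source-sink pairs `(s i, t i)`. -/
structure IsFlow (N : DirPolyNet V E) {ι : Type} [Fintype ι] (s t : ι → V)
    (f : ι → List E → ℝ) : Prop where
  nonneg : ∀ i p, 0 ≤ f i p
  supp : ∀ i p, f i p ≠ 0 → N.IsPath (s i) (t i) p
  fin : ∀ i, (Function.support (f i)).Finite
  capM : ∀ v, ∀ S ⊆ N.inE v, ∑ e ∈ S, N.edgeFlow f e ≤ N.rhoM v S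
  capP : ∀ v, ∀ S ⊆ N.outE v, ∑ e ∈ S, N.edgeFlow f e ≤ N.rhoP v S

/-- `D(F)`: the total demand of the pairs separated by `F`. -/
noncomputable def sepDemand (N : DirPolyNet V E) {ι : Type} [Fintype ι]
    (s t : ι → V) (D : ι → ℝ) (F : Finset E) : ℝ :=
  ∑ i : ι, if N.Separates F (s i) (t i) then D i else 0

/-- The value of the maximum throughput multicommodity flow. -/
noncomputable def maxThroughput (N : DirPolyNet V E) {ι : Type} [Fintype ι]
    (s t : ι → V) : ℝ :=
  sSup { r : ℝ | ∃ f : ι → List E → ℝ, N.IsFlow s t f ∧ r = ∑ i : ι, rate f i }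

/-- The value of the maximum concurrent multicommodity flow for demands `D`. -/
noncomputable def maxConcurrent (N : DirPolyNet V E) {ι : Type} [Fintype ι]
    (s t : ι → V) (D : ι → ℝ) : ℝ :=
  sSup { lam : ℝ | ∃ f : ι → List E → ℝ, N.IsFlow s t f ∧ ∀ i, rate f i = lam * D i }

end DirPolyNet

/-- `DWalk tl hd s t p`: in the directed graph with tail map `tl` and head map `hd`,
the list of edges `p` is a directed walk from `s` to `t`. -/
def DWalk {V E : Type} (tl hd : E → V) : V → V → List E → Prop
  | s, t, [] => s = t
  | s, t, e :: p => tl e = s ∧ DWalk tl hd (hd e) t p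

/-- Shortest-path distance (in `ℝ≥0∞`, `⊤` when unreachable) under edge lengths `len`. -/
noncomputable def ddist {V E : Type} (tl hd : E → V) (len : E → ℝ) (u v : V) : ℝ≥0∞ :=
  ⨅ p : { p : List E // DWalk tl hd u v p }, ENNReal.ofReal ((p.1.map len).sum)

/-- `F` separates the ordered pair `(s,t)` in the directed graph given by `tl`, `hd`. -/
def DSep {V E : Type} (tl hd : E → V) (F : Finset E) (s t : V) : Prop :=
  ¬ ∃ p : List E, DWalk tl hd s t p ∧ ∀ e ∈ p, e ∉ F

/-- The Lovász extension of `ρ` on the ground set `ground`,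
`ρ̂(x) = ∫_0^∞ ρ({e ∈ ground : x e ≥ θ}) dθ` (which agrees with `∫_0^1` when `x ≤ 1`). -/
noncomputable def lovaszExt {E : Type} [Fintype E] (ρ : Finset E → ℝ)
    (ground : Finset E) (x : E → ℝ) : ℝ :=
  ∫ θ in Set.Ioi (0:ℝ), ρ (ground.filter (fun e => θ ≤ x e))

open DirPolyNet

/-!
Every node of `N` is expanded into a gadget. An edge `e` becomes the path
`tail e → outPort e → inPort e → head e`, whose first arc has length `ct e` and last arc
length `ch e`. Ordering the edges that leave `v` by `ct`, the first arc of `e` costs the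
marginal value `ρ⁺_v(U) - ρ⁺_v(U \ {e})` of `e` on the set `U` of edges above it, so that
`Σ cost · length` is the chain formula for the Lovász extension `ρ̂⁺_v(d⁺_v)`; dually at heads.
Infinite-cost shortcuts of length zero `outPort f → outPort e` for `f` above `e` do not shorten
any route, and they force a finite cut that blocks `e` at its tail to contain the first arcs of
all edges above `e`: an up-set, whose cost telescopes to its `ρ⁺_v`-value. So the non-loop
edges blocked at some endpoint, each charged to that endpoint, form a cut of `N` of cost `ν` at
most that of the gadget cut; every other edge has a route through its gadget avoiding the cut,
and loops can be skipped, so it separates all the pairs the gadget cut does.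
-/

noncomputable section

section KeyMarginal

variable {E K : Type} [LinearOrder K]

def keyUpSet (κ : E → K) (s : Finset E) (e : E) : Finset E :=
  s.filter fun f => κ e ≤ κ f

def keyMarginal (ρ : Finset E → ℝ) (κ : E → K) (s : Finset E) (e : E) : ℝ :=
  ρ (keyUpSet κ s e) - ρ ((keyUpSet κ s e).erase e)

variable {ρ : Finset E → ℝ} {κ : E → K} {s : Finset E}

lemma keyMarginal_nonneg (hmono : ∀ A B, A ⊆ B → B ⊆ s → ρ A ≤ ρ B) (e : E) :
    0 ≤ keyMarginal ρ κ s e :=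
  sub_nonneg.2 (hmono _ _ (erase_subset _ _) (filter_subset _ _))

lemma sum_keyMarginal_of_isUpper (hκ : Function.Injective κ) (h0 : ρ ∅ = 0) {T : Finset E}
    (hT : T ⊆ s) (hup : ∀ e ∈ T, ∀ f ∈ s, κ e ≤ κ f → f ∈ T) :
    ∑ f ∈ T, keyMarginal ρ κ s f = ρ T := by
  induction T using Finset.strongInduction with
  | _ T ih =>
  rcases T.eq_empty_or_nonempty with rfl | hne
  · simp [h0]
  obtain ⟨e₀, he₀, hmin⟩ := T.exists_min_image κ hne
  have hUp : keyUpSet κ s e₀ = T :=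
    Subset.antisymm (fun f hf => hup e₀ he₀ f (mem_filter.1 hf).1 (mem_filter.1 hf).2)
      fun f hf => mem_filter.2 ⟨hT hf, hmin f hf⟩
  have hup' : ∀ e ∈ T.erase e₀, ∀ f ∈ s, κ e ≤ κ f → f ∈ T.erase e₀ := by
    intro e he f hf hle
    refine mem_erase.2 ⟨?_, hup e (mem_of_mem_erase he) f hf hle⟩
    rintro rfl
    exact ne_of_mem_erase he (hκ (le_antisymm hle (hmin e (mem_of_mem_erase he))))
  rw [← add_sum_erase T _ he₀, ih _ (erase_ssubset he₀) ((erase_subset _ _).trans hT) hup',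
    keyMarginal, hUp, sub_add_cancel]

lemma lovaszExt_eq_sum_keyMarginal_mul [Fintype E] (hκ : Function.Injective κ) (h0 : ρ ∅ = 0)
    {x : E → ℝ} (hκx : ∀ e f, κ e ≤ κ f → x e ≤ x f) (hx : ∀ e ∈ s, 0 ≤ x e) :
    lovaszExt ρ s x = ∑ e ∈ s, keyMarginal ρ κ s e * x e := by
  have hlevel : Set.EqOn (fun θ => ρ (s.filter fun e => θ ≤ x e))
      (fun θ => ∑ e ∈ s, (Set.Ioc 0 (x e)).indicator (fun _ => keyMarginal ρ κ s e) θ)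
      (Set.Ioi 0) := by
    intro θ hθ
    simp only [Set.indicator_apply, Set.mem_Ioc, Set.mem_Ioi.1 hθ, true_and]
    rw [← sum_filter]
    refine (sum_keyMarginal_of_isUpper hκ h0 (filter_subset _ _) fun e he f hf hle => ?_).symm
    exact mem_filter.2 ⟨hf, (mem_filter.1 he).2.trans (hκx e f hle)⟩
  rw [lovaszExt, setIntegral_congr_fun measurableSet_Ioi hlevel, integral_finsetSum]
  · refine sum_congr rfl fun e he => ?_
    rw [setIntegral_indicator measurableSet_Ioc, Set.inter_eq_right.2 Set.Ioc_subset_Ioi_self,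
      setIntegral_const, measureReal_def, Real.volume_Ioc, sub_zero,
      ENNReal.toReal_ofReal (hx e he), smul_eq_mul, mul_comm]
  · intro e _
    exact (integrable_indicator_iff measurableSet_Ioc).2
      (integrableOn_const ((Measure.restrict_apply_le _ _).trans_lt measure_Ioc_lt_top).ne)

end KeyMarginal

section RefineKey

variable {E : Type} [Fintype E]

def refineKey (x : E → ℝ) (e : E) : ℝ ×ₗ Fin (Fintype.card E) :=
  toLex (x e, Fintype.equivFin E e)

lemma refineKey_injective (x : E → ℝ) : Function.Injective (refineKey x) := fun _ _ h =>
  (Fintype.equivFin E).injective (congrArg (fun p => (ofLex p).2) h)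

lemma le_of_refineKey_le {x : E → ℝ} {e f : E} (h : refineKey x e ≤ refineKey x f) :
    x e ≤ x f := by
  rcases Prod.Lex.le_iff.1 h with h | ⟨h, _⟩
  exacts [h.le, h.le]

end RefineKey

section Fiber

variable {V E K : Type} [Fintype E] [DecidableEq V] [LinearOrder K]
  (π : E → V) (ρ : V → Finset E → ℝ) (κ : E → K)

def fiberUpSet (e : E) : Finset E :=
  keyUpSet κ (univ.filter fun f => π f = π e) e

def fiberMarginal (e : E) : ℝ :=
  keyMarginal (ρ (π e)) κ (univ.filter fun f => π f = π e) e

variable {π ρ κ}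

lemma mem_fiberUpSet {e f : E} : f ∈ fiberUpSet π κ e ↔ π f = π e ∧ κ e ≤ κ f := by
  simp [fiberUpSet, keyUpSet]

lemma self_mem_fiberUpSet (e : E) : e ∈ fiberUpSet π κ e :=
  mem_fiberUpSet.2 ⟨rfl, le_rfl⟩

lemma fiberUpSet_subset {e f : E} (h : f ∈ fiberUpSet π κ e) :
    fiberUpSet π κ f ⊆ fiberUpSet π κ e := fun g hg => by
  rw [mem_fiberUpSet] at h hg ⊢
  exact ⟨hg.1.trans h.1, h.2.trans hg.2⟩

lemma fiberMarginal_nonneg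
    (hmono : ∀ v A B, A ⊆ B → B ⊆ univ.filter (fun f => π f = v) → ρ v A ≤ ρ v B)
    (e : E) :
    0 ≤ fiberMarginal π ρ κ e :=
  keyMarginal_nonneg (hmono _) e

lemma sum_lovaszExt_fiber_eq_sum_fiberMarginal_mul [Fintype V] (hκ : Function.Injective κ)
    (h0 : ∀ v, ρ v ∅ = 0) {x : E → ℝ}
    (hκx : ∀ e f, κ e ≤ κ f → x e ≤ x f) (hx : ∀ e, 0 ≤ x e) :
    ∑ v, lovaszExt (ρ v) (univ.filter fun f => π f = v) x =
      ∑ e, fiberMarginal π ρ κ e * x e := by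
  rw [← sum_fiberwise univ π]
  refine sum_congr rfl fun v _ => ?_
  rw [lovaszExt_eq_sum_keyMarginal_mul hκ (h0 v) hκx fun e _ => hx e]
  refine sum_congr rfl fun e he => ?_
  obtain rfl := (mem_filter.1 he).2
  rfl

lemma sum_fiber_filter_eq_sum_fiberMarginal [Fintype V] (hκ : Function.Injective κ)
    (h0 : ∀ v, ρ v ∅ = 0) (P : E → Prop) [DecidablePred P]
    (hP : ∀ e, P e → ∀ f ∈ fiberUpSet π κ e, P f) :
    ∑ v, ρ v ((univ.filter fun f => π f = v).filter P) =
      ∑ e ∈ univ.filter P, fiberMarginal π ρ κ e := by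
  rw [← sum_fiberwise _ π]
  refine sum_congr rfl fun v _ => ?_
  rw [← sum_keyMarginal_of_isUpper hκ (h0 v) (filter_subset _ _), filter_comm]
  · refine sum_congr rfl fun e he => ?_
    obtain rfl := (mem_filter.1 he).2
    rfl
  · intro e he f hf hle
    obtain ⟨he, hPe⟩ := mem_filter.1 he
    refine mem_filter.2 ⟨hf, hP e hPe f (mem_fiberUpSet.2 ⟨?_, hle⟩)⟩
    rw [(mem_filter.1 hf).2, (mem_filter.1 he).2]

end Fiber

section Walks

variable {V E : Type} {tl hd : E → V}

lemma DWalk.append : ∀ {p q : List E} {u v w : V},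
    DWalk tl hd u v p → DWalk tl hd v w q → DWalk tl hd u w (p ++ q)
  | [], _, _, _, _, huv, hq => (show _ = _ from huv) ▸ hq
  | _ :: _, _, _, _, _, ⟨he, hp⟩, hq => ⟨he, DWalk.append hp hq⟩

lemma ddist_le_of_forall_dwalk {V' E' : Type} {tl' hd' : E' → V'} {len : E → ℝ}
    {len' : E' → ℝ} {u v : V} {u' v' : V'}
    (h : ∀ p, DWalk tl hd u v p →
      ∃ q, DWalk tl' hd' u' v' q ∧ (q.map len').sum ≤ (p.map len).sum) :
    ddist tl' hd' len' u' v' ≤ ddist tl hd len u v :=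
  le_iInf fun ⟨p, hp⟩ =>
    let ⟨q, hq, hle⟩ := h p hp
    (iInf_le _ ⟨q, hq⟩).trans (ENNReal.ofReal_le_ofReal hle)

end Walks

inductive GadgetNode (E : Type)
  | outPort (e : E)
  | inPort (e : E)
  deriving Fintype

inductive GadgetArc (E : Type)
  | tailArc (e : E)
  | midArc (e : E)
  | headArc (e : E)
  | outShift (e f : E)
  | inShift (e g : E)
  deriving Fintype

namespace GadgetArc

variable {E : Type} (ct ch : E → ℝ)

def length : GadgetArc E → ℝ
  | tailArc e => ct e
  | headArc e => ch e
  | _ => 0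

variable {ct ch}

lemma length_nonneg (hct : ∀ e, 0 ≤ ct e) (hch : ∀ e, 0 ≤ ch e) (a : GadgetArc E) :
    0 ≤ a.length ct ch := by
  cases a <;> simp only [length, le_refl, hct, hch]

def liftWalk : List E → List (GadgetArc E)
  | [] => []
  | e :: p => tailArc e :: midArc e :: headArc e :: liftWalk p

lemma sum_map_length_liftWalk {ℓ : E → ℝ} (hsum : ∀ e, ct e + ch e = ℓ e) (p : List E) :
    ((liftWalk p).map (length ct ch)).sum = (p.map ℓ).sum := by
  induction p with
  | nil => rfl
  | cons e p ih =>
    simp only [liftWalk, List.map_cons, List.sum_cons, length, ih, ← hsum]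
    ring

end GadgetArc

namespace DirPolyNet

variable {V E : Type} [Fintype V] [Fintype E] [DecidableEq V] [DecidableEq E]
  (N : DirPolyNet V E) (ct ch : E → ℝ)

lemma cutCost_le_of_valid {F : Finset E} {g : E → V} (hg : N.Valid F g)
    (SM SP : V → Finset E) (hSM : ∀ v, SM v ⊆ N.inE v) (hSP : ∀ v, SP v ⊆ N.outE v)
    (hgM : ∀ v, (N.inE v ∩ F).filter (fun e => g e = v) ⊆ SM v)
    (hgP : ∀ v, (N.outE v ∩ F).filter (fun e => g e = v) ⊆ SP v) :
    N.cutCost F ≤ ∑ v, (N.rhoM v (SM v) + N.rhoP v (SP v)) := by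
  refine le_trans (csInf_le ⟨0, ?_⟩ ⟨g, hg, rfl⟩)
    (sum_le_sum fun v _ => add_le_add (N.rhoM_mono v _ _ (hgM v) (hSM v))
      (N.rhoP_mono v _ _ (hgP v) (hSP v)))
  rintro _ ⟨g', -, rfl⟩
  exact sum_nonneg fun v _ => add_nonneg
    (N.rhoM_nonneg v _ ((filter_subset _ _).trans inter_subset_left))
    (N.rhoP_nonneg v _ ((filter_subset _ _).trans inter_subset_left))

def outUpSet (e : E) : Finset E := fiberUpSet N.tail (refineKey ct) e

def inUpSet (e : E) : Finset E := fiberUpSet N.head (refineKey ch) e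

def outMarginal (e : E) : ℝ := fiberMarginal N.tail N.rhoP (refineKey ct) e

def inMarginal (e : E) : ℝ := fiberMarginal N.head N.rhoM (refineKey ch) e

/-- `outShift e f` and `inShift e g` are self-loops unless `f ∈ outUpSet e`, resp.
`g ∈ inUpSet e`. -/
def gadgetTail : GadgetArc E → V ⊕ GadgetNode E
  | .tailArc e => .inl (N.tail e)
  | .midArc e => .inr (.outPort e)
  | .headArc e => .inr (.inPort e)
  | .outShift e f => .inr (.outPort (if f ∈ N.outUpSet ct e then f else e))
  | .inShift e _ => .inr (.inPort e)

def gadgetHead : GadgetArc E → V ⊕ GadgetNode E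
  | .tailArc e => .inr (.outPort e)
  | .midArc e => .inr (.inPort e)
  | .headArc e => .inl (N.head e)
  | .outShift e _ => .inr (.outPort e)
  | .inShift e g => .inr (.inPort (if g ∈ N.inUpSet ch e then g else e))

def gadgetCost : GadgetArc E → ℝ≥0∞
  | .tailArc e => ENNReal.ofReal (N.outMarginal ct e)
  | .headArc e => ENNReal.ofReal (N.inMarginal ch e)
  | _ => ⊤

variable {N ct ch}

lemma outMarginal_nonneg (e : E) : 0 ≤ N.outMarginal ct e :=
  fiberMarginal_nonneg N.rhoP_mono e

lemma inMarginal_nonneg (e : E) : 0 ≤ N.inMarginal ch e :=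
  fiberMarginal_nonneg N.rhoM_mono e

lemma dwalk_liftWalk : ∀ {p : List E} {u v : V}, DWalk N.tail N.head u v p →
    DWalk (N.gadgetTail ct) (N.gadgetHead ch) (.inl u) (.inl v) (GadgetArc.liftWalk p)
  | [], _, _, huv => congrArg Sum.inl huv
  | _ :: _, _, _, ⟨he, hp⟩ => ⟨congrArg Sum.inl he, rfl, rfl, dwalk_liftWalk hp⟩

variable (N ct ch) in
/-- The invariant, propagated backwards along a gadget walk of length `L` from `x` to `.inl t`,
by which the walk projects to a walk of `N` that is no longer. -/
def GadgetReach (ℓ : E → ℝ) (t : V) : V ⊕ GadgetNode E → ℝ → Prop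
  | .inl u, L => ∃ q, DWalk N.tail N.head u t q ∧ (q.map ℓ).sum ≤ L
  | .inr (.outPort e), L => ∃ e' q, N.tail e' = N.tail e ∧
      DWalk N.tail N.head (N.head e') t q ∧ ℓ e' + (q.map ℓ).sum ≤ ct e + L
  | .inr (.inPort e), L => ∃ q, DWalk N.tail N.head (N.head e) t q ∧
      ch e + (q.map ℓ).sum ≤ L

lemma gadgetReach_tail {ℓ : E → ℝ} (hsum : ∀ e, ct e + ch e = ℓ e) {t : V}
    (a : GadgetArc E) {L : ℝ} (h : GadgetReach N ct ch ℓ t (N.gadgetHead ch a) L) :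
    GadgetReach N ct ch ℓ t (N.gadgetTail ct a) (a.length ct ch + L) := by
  cases a with
  | tailArc e =>
    obtain ⟨e', q, he', hq, hle⟩ := h
    exact ⟨e' :: q, ⟨he', hq⟩, by simpa [GadgetArc.length] using hle⟩
  | midArc e =>
    obtain ⟨q, hq, hle⟩ := h
    exact ⟨e, q, rfl, hq, by simp only [GadgetArc.length, ← hsum]; linarith⟩
  | headArc e =>
    obtain ⟨q, hq, hle⟩ := h
    exact ⟨q, hq, by simp only [GadgetArc.length]; linarith⟩
  | outShift e f =>
    obtain ⟨e', q, he', hq, hle⟩ := h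
    simp only [gadgetTail, GadgetArc.length, zero_add]
    split_ifs with hf
    · obtain ⟨hfe, hef⟩ := mem_fiberUpSet.1 hf
      exact ⟨e', q, he'.trans hfe.symm, hq, hle.trans (by linarith [le_of_refineKey_le hef])⟩
    · exact ⟨e', q, he', hq, hle⟩
  | inShift e g =>
    simp only [gadgetHead] at h
    simp only [gadgetTail, GadgetArc.length, zero_add]
    split_ifs at h with hg
    · obtain ⟨hge, heg⟩ := mem_fiberUpSet.1 hg
      obtain ⟨q, hq, hle⟩ := h
      exact ⟨q, hge ▸ hq, by linarith [le_of_refineKey_le heg]⟩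
    · exact h

lemma gadgetReach_of_dwalk {ℓ : E → ℝ} (hsum : ∀ e, ct e + ch e = ℓ e) {t : V} :
    ∀ {p : List (GadgetArc E)} {x : V ⊕ GadgetNode E},
      DWalk (N.gadgetTail ct) (N.gadgetHead ch) x (.inl t) p →
      GadgetReach N ct ch ℓ t x ((p.map (GadgetArc.length ct ch)).sum)
  | [], _, hx => (show _ = _ from hx) ▸ ⟨[], rfl, le_rfl⟩
  | a :: _, _, ⟨ha, hp⟩ => by
    rw [List.map_cons, List.sum_cons, ← ha]
    exact gadgetReach_tail hsum a (gadgetReach_of_dwalk hsum hp)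

lemma ddist_gadget {ℓ : E → ℝ} (hsum : ∀ e, ct e + ch e = ℓ e) (u v : V) :
    ddist (N.gadgetTail ct) (N.gadgetHead ch) (GadgetArc.length ct ch) (.inl u) (.inl v) =
      ddist N.tail N.head ℓ u v := by
  refine le_antisymm (ddist_le_of_forall_dwalk fun p hp => ?_)
    (ddist_le_of_forall_dwalk fun p hp => gadgetReach_of_dwalk hsum hp)
  exact ⟨GadgetArc.liftWalk p, dwalk_liftWalk hp, (GadgetArc.sum_map_length_liftWalk hsum p).le⟩

lemma finsum_gadgetCost_mul_length (hct : ∀ e, 0 ≤ ct e) (hch : ∀ e, 0 ≤ ch e) :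
    ∑ᶠ a : GadgetArc E, N.gadgetCost ct ch a * ENNReal.ofReal (a.length ct ch) =
      ENNReal.ofReal (∑ v : V,
        (lovaszExt (N.rhoM v) (N.inE v) ch + lovaszExt (N.rhoP v) (N.outE v) ct)) := by
  have hzero : ∀ a ∈ (univ : Finset (GadgetArc E)),
      a ∉ univ.image .tailArc ∪ univ.image .headArc →
      N.gadgetCost ct ch a * ENNReal.ofReal (a.length ct ch) = 0 := by
    rintro (e | e | e | ⟨e, f⟩ | ⟨e, g⟩) - h <;> simp_all [GadgetArc.length]
  rw [finsum_eq_sum_of_fintype, ← sum_subset (subset_univ _) hzero,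
    sum_union (by simp [disjoint_left]), sum_image fun _ _ _ _ => GadgetArc.tailArc.inj,
    sum_image fun _ _ _ _ => GadgetArc.headArc.inj]
  simp only [gadgetCost, GadgetArc.length, ← ENNReal.ofReal_mul (outMarginal_nonneg _),
    ← ENNReal.ofReal_mul (inMarginal_nonneg _), DirPolyNet.inE, DirPolyNet.outE]
  rw [← ENNReal.ofReal_sum_of_nonneg fun e _ => mul_nonneg (outMarginal_nonneg e) (hct e),
    ← ENNReal.ofReal_sum_of_nonneg fun e _ => mul_nonneg (inMarginal_nonneg e) (hch e),
    ← ENNReal.ofReal_add (sum_nonneg fun e _ => mul_nonneg (outMarginal_nonneg e) (hct e))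
      (sum_nonneg fun e _ => mul_nonneg (inMarginal_nonneg e) (hch e)),
    sum_add_distrib, add_comm,
    sum_lovaszExt_fiber_eq_sum_fiberMarginal_mul (refineKey_injective ch) N.rhoM_empty
      (fun _ _ => le_of_refineKey_le) hch,
    sum_lovaszExt_fiber_eq_sum_fiberMarginal_mul (refineKey_injective ct) N.rhoP_empty
      (fun _ _ => le_of_refineKey_le) hct]
  rfl

section Cut

variable (N ct ch) (F' : Finset (GadgetArc E))

def IsTailBlocked (e : E) : Prop := ∀ f ∈ N.outUpSet ct e, .tailArc f ∈ F'

def IsHeadBlocked (e : E) : Prop := ∀ g ∈ N.inUpSet ch e, .headArc g ∈ F'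

def gadgetCutEdges : Finset E :=
  univ.filter fun e =>
    N.tail e ≠ N.head e ∧ (N.IsTailBlocked ct F' e ∨ N.IsHeadBlocked ch F' e)

variable {N ct ch F'}

lemma mem_gadgetCutEdges {e : E} : e ∈ N.gadgetCutEdges ct ch F' ↔
    N.tail e ≠ N.head e ∧ (N.IsTailBlocked ct F' e ∨ N.IsHeadBlocked ch F' e) := by
  simp [gadgetCutEdges]

lemma exists_gadget_dwalk_of_notMem (hF' : ∀ a ∈ F', N.gadgetCost ct ch a ≠ ⊤) {e : E}
    (hloop : N.tail e ≠ N.head e) (he : e ∉ N.gadgetCutEdges ct ch F') :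
    ∃ r, DWalk (N.gadgetTail ct) (N.gadgetHead ch) (.inl (N.tail e)) (.inl (N.head e)) r ∧
      ∀ a ∈ r, a ∉ F' := by
  simp only [mem_gadgetCutEdges, IsTailBlocked, IsHeadBlocked, not_and, not_or, not_forall,
    exists_prop] at he
  obtain ⟨⟨f, hf, hfF⟩, ⟨g, hg, hgF⟩⟩ := he hloop
  have htop : ∀ a, N.gadgetCost ct ch a = ⊤ → a ∉ F' := fun a ha haF => hF' a haF ha
  refine ⟨[.tailArc f, .outShift e f, .midArc e, .inShift e g, .headArc g], ?_, ?_⟩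
  · simp [DWalk, gadgetTail, gadgetHead, hf, hg, (mem_fiberUpSet.1 hf).1,
      (mem_fiberUpSet.1 hg).1]
  · simp only [List.mem_cons, List.not_mem_nil, or_false]
    rintro a (rfl | rfl | rfl | rfl | rfl)
    exacts [hfF, htop _ rfl, htop _ rfl, htop _ rfl, hgF]

lemma exists_gadget_dwalk_avoiding (hF' : ∀ a ∈ F', N.gadgetCost ct ch a ≠ ⊤) :
    ∀ {p : List E} {u v : V}, DWalk N.tail N.head u v p →
      (∀ e ∈ p, e ∉ N.gadgetCutEdges ct ch F') →
      ∃ q, DWalk (N.gadgetTail ct) (N.gadgetHead ch) (.inl u) (.inl v) q ∧ ∀ a ∈ q, a ∉ F'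
  | [], _, _, huv, _ => ⟨[], congrArg Sum.inl huv, by simp⟩
  | e :: _, _, _, ⟨rfl, hp⟩, hav => by
    obtain ⟨q, hq, hqF⟩ := exists_gadget_dwalk_avoiding hF' hp fun f hf =>
      hav f (List.mem_cons_of_mem _ hf)
    by_cases hloop : N.tail e = N.head e
    · exact ⟨q, by rwa [hloop], hqF⟩
    obtain ⟨r, hr, hrF⟩ := exists_gadget_dwalk_of_notMem hF' hloop (hav e List.mem_cons_self)
    exact ⟨r ++ q, hr.append hq, fun a ha => (List.mem_append.1 ha).elim (hrF a) (hqF a)⟩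

lemma dsep_of_gadget_dsep (hF' : ∀ a ∈ F', N.gadgetCost ct ch a ≠ ⊤) {u v : V}
    (h : DSep (N.gadgetTail ct) (N.gadgetHead ch) F' (.inl u) (.inl v)) :
    DSep N.tail N.head (N.gadgetCutEdges ct ch F') u v :=
  fun ⟨_, hp, hav⟩ => h (exists_gadget_dwalk_avoiding hF' hp hav)

lemma ofReal_sum_marginal_le_sum_gadgetCost {A B : Finset E} (hA : ∀ e ∈ A, .tailArc e ∈ F')
    (hB : ∀ e ∈ B, .headArc e ∈ F') :
    ENNReal.ofReal (∑ e ∈ A, N.outMarginal ct e + ∑ e ∈ B, N.inMarginal ch e) ≤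
      ∑ a ∈ F', N.gadgetCost ct ch a := by
  rw [ENNReal.ofReal_add (sum_nonneg fun e _ => outMarginal_nonneg e)
      (sum_nonneg fun e _ => inMarginal_nonneg e),
    ENNReal.ofReal_sum_of_nonneg fun e _ => outMarginal_nonneg e,
    ENNReal.ofReal_sum_of_nonneg fun e _ => inMarginal_nonneg e]
  calc _ = ∑ a ∈ A.image .tailArc ∪ B.image .headArc, N.gadgetCost ct ch a := by
        rw [sum_union (by simp [disjoint_left]), sum_image (by simp), sum_image (by simp)]
        rfl
    _ ≤ _ := sum_le_sum_of_subset (union_subset (by simpa [image_subset_iff] using hA)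
        (by simpa [image_subset_iff] using hB))

lemma cutCost_gadgetCutEdges_le_sum :
    N.cutCost (N.gadgetCutEdges ct ch F') ≤
      ∑ v, (N.rhoM v ((N.inE v).filter (N.IsHeadBlocked ch F')) +
        N.rhoP v ((N.outE v).filter (N.IsTailBlocked ct F'))) := by
  set g : E → V := fun e => if N.IsHeadBlocked ch F' e then N.head e else N.tail e
  refine N.cutCost_le_of_valid (g := g) (fun e _ => ?_) _ _ (fun _ => filter_subset _ _)
    (fun _ => filter_subset _ _) (fun v e he => ?_) (fun v e he => ?_)
  · by_cases h : N.IsHeadBlocked ch F' e <;> simp [g, h]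
  all_goals
    simp only [mem_filter, mem_inter, DirPolyNet.inE, DirPolyNet.outE, mem_univ,
      true_and] at he ⊢
    obtain ⟨⟨rfl, heF⟩, hge⟩ := he
    refine ⟨rfl, ?_⟩
    by_cases h : N.IsHeadBlocked ch F' e <;> simp only [g, h, if_true, if_false] at hge
  -- in the two mismatched cases `e` would be a loop
  · exact h
  · exact absurd hge (mem_gadgetCutEdges.1 heF).1
  · exact absurd hge.symm (mem_gadgetCutEdges.1 heF).1
  · exact (mem_gadgetCutEdges.1 heF).2.resolve_right h

lemma cutCost_gadgetCutEdges_le :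
    ENNReal.ofReal (N.cutCost (N.gadgetCutEdges ct ch F')) ≤
      ∑ a ∈ F', N.gadgetCost ct ch a := by
  have hM : ∑ v, N.rhoM v ((N.inE v).filter (N.IsHeadBlocked ch F')) =
      ∑ e ∈ univ.filter (N.IsHeadBlocked ch F'), N.inMarginal ch e :=
    sum_fiber_filter_eq_sum_fiberMarginal (refineKey_injective ch) N.rhoM_empty _
      fun _ he _ hf _ hg => he _ (fiberUpSet_subset hf hg)
  have hP : ∑ v, N.rhoP v ((N.outE v).filter (N.IsTailBlocked ct F')) =
      ∑ e ∈ univ.filter (N.IsTailBlocked ct F'), N.outMarginal ct e :=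
    sum_fiber_filter_eq_sum_fiberMarginal (refineKey_injective ct) N.rhoP_empty _
      fun _ he _ hf _ hg => he _ (fiberUpSet_subset hf hg)
  have hcut := cutCost_gadgetCutEdges_le_sum (N := N) (ct := ct) (ch := ch) (F' := F')
  rw [sum_add_distrib, hM, hP, add_comm] at hcut
  exact (ENNReal.ofReal_le_ofReal hcut).trans (ofReal_sum_marginal_le_sum_gadgetCost
    (fun e he => (mem_filter.1 he).2 e (self_mem_fiberUpSet e))
    (fun e he => (mem_filter.1 he).2 e (self_mem_fiberUpSet e)))

end Cut

end DirPolyNet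

end

/-- Given a directed polymatroidal network `N` and a fractional cut
solution (`ℓ e = ct e + ch e`, the tail and head portions), there is a finite directed
edge-capacitated graph `H` on vertex set `V ⊕ W` with lengths `ℓ'` and costs `c` such that:
(i) distances between nodes of `V` are preserved; (ii) the total fractional cost
`Σ c(e)·ℓ'(e)` equals `Σ_v (ρ̂⁻_v(d⁻_v) + ρ̂⁺_v(d⁺_v))`; and (iii) every finite-cost cut
`F'` of `H` yields a cut `F` of `N` separating at least the same pairs of `V`-nodes,
with `ν(F) ≤ c(F')`. -/
theorem polymatroidal_to_edge_capacitated_reduction {V E : Type} [Fintype V] [Fintype E]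
    [DecidableEq V] [DecidableEq E] (N : DirPolyNet V E)
    (ℓ ct ch : E → ℝ) (hct : ∀ e, 0 ≤ ct e) (hch : ∀ e, 0 ≤ ch e)
    (hsum : ∀ e, ct e + ch e = ℓ e) :
    ∃ (W E' : Type) (_ : Fintype W) (_ : Fintype E')
      (tl hd : E' → V ⊕ W) (ℓ' : E' → ℝ) (c : E' → ℝ≥0∞),
      (∀ e, 0 ≤ ℓ' e) ∧
      (∀ u v : V, ddist tl hd ℓ' (Sum.inl u) (Sum.inl v) = ddist N.tail N.head ℓ u v) ∧
      (∑ᶠ e : E', c e * ENNReal.ofReal (ℓ' e) =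
        ENNReal.ofReal (∑ v : V,
          (lovaszExt (N.rhoM v) (N.inE v) ch + lovaszExt (N.rhoP v) (N.outE v) ct))) ∧
      (∀ F' : Finset E', (∀ e ∈ F', c e ≠ ⊤) →
        ∃ F : Finset E,
          (∀ u v : V, DSep tl hd F' (Sum.inl u) (Sum.inl v) → DSep N.tail N.head F u v) ∧
          ENNReal.ofReal (N.cutCost F) ≤ ∑ e ∈ F', c e) :=
  ⟨GadgetNode E, GadgetArc E, inferInstance, inferInstance, N.gadgetTail ct, N.gadgetHead ch,
    GadgetArc.length ct ch, N.gadgetCost ct ch, GadgetArc.length_nonneg hct hch,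
    N.ddist_gadget hsum, N.finsum_gadgetCost_mul_length hct hch, fun F' hF' =>
      ⟨N.gadgetCutEdges ct ch F', fun _ _ => N.dsep_of_gadget_dsep hF',
        N.cutCost_gadgetCutEdges_le⟩⟩
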